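/- If 0 < q < q', then P_I(q) ≤ P_I(q') pointwise: for every Q ∈ P_I(q) and every Q' ∈ P_I(q'), one has Q ≤ Q'. -/

import Mathlib

open Matrix ComplexOrder

noncomputable section

namespace FRIR

variable {d N : ℕ}

/-- A POVM with `N+1` outcomes on a `d`-dimensional system: `M 0` is the
inconclusive outcome, `M i.succ` is the conclusive outcome for state `i`. -/
def IsPOVM (M : Fin (N + 1) → Matrix (Fin d) (Fin d) ℂ) : Prop :=
  (∀ i, (M i).PosSemidef) ∧ ∑ i, M i = 1

/-- `ρ₀ = ∑ i q_i ρ_i`. -/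
def rho0 (q : Fin N → ℝ) (ρ : Fin N → Matrix (Fin d) (Fin d) ℂ) :
    Matrix (Fin d) (Fin d) ℂ :=
  ∑ i, (q i : ℂ) • ρ i

/-- The probability of the inconclusive result, `P_I = tr(ρ₀ M₀)`. -/
def PIof (q : Fin N → ℝ) (ρ : Fin N → Matrix (Fin d) (Fin d) ℂ)
    (M : Fin (N + 1) → Matrix (Fin d) (Fin d) ℂ) : ℝ :=
  (Matrix.trace (rho0 q ρ * M 0)).re

/-- `P_cor = ∑ i q_i tr(ρ_i M_i)`. -/
def Pcor (q : Fin N → ℝ) (ρ : Fin N → Matrix (Fin d) (Fin d) ℂ)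
    (M : Fin (N + 1) → Matrix (Fin d) (Fin d) ℂ) : ℝ :=
  ∑ i : Fin N, q i * (Matrix.trace (ρ i * M i.succ)).re

/-- `P̄_cor = q·tr(ρ₀M₀) + ∑ i q_i tr(ρ_i M_i)`. -/
def PbarCor (qv : ℝ) (q : Fin N → ℝ) (ρ : Fin N → Matrix (Fin d) (Fin d) ℂ)
    (M : Fin (N + 1) → Matrix (Fin d) (Fin d) ℂ) : ℝ :=
  qv * PIof q ρ M + Pcor q ρ M

/-- `P̄_cor^opt(q)`: the maximal value of `P̄_cor` over all POVMs. -/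
def PbarOpt (qv : ℝ) (q : Fin N → ℝ) (ρ : Fin N → Matrix (Fin d) (Fin d) ℂ) : ℝ :=
  sSup {x : ℝ | ∃ M, IsPOVM M ∧ PbarCor qv q ρ M = x}

/-- `P_cor^opt(Q)`: the maximal value of `P_cor` over POVMs with `P_I = Q`. -/
def PcorOpt (Q : ℝ) (q : Fin N → ℝ) (ρ : Fin N → Matrix (Fin d) (Fin d) ℂ) : ℝ :=
  sSup {x : ℝ | ∃ M, IsPOVM M ∧ PIof q ρ M = Q ∧ Pcor q ρ M = x}

/-- `P_I(q) = { tr(ρ₀M₀) : POVMs attaining P̄_cor^opt(q) }`. -/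
def PIset (qv : ℝ) (q : Fin N → ℝ) (ρ : Fin N → Matrix (Fin d) (Fin d) ℂ) : Set ℝ :=
  {Q : ℝ | ∃ M, IsPOVM M ∧ PbarCor qv q ρ M = PbarOpt qv q ρ ∧ PIof q ρ M = Q}

/-! Adding the optimality of `M` at weight `q` (tested against `M'`) to that of `M'` at weight
`q'` (tested against `M`) gives `(q' - q) (P_I(M) - P_I(M')) ≤ 0`. The suprema are finite because
`0 ≤ tr(A M_k) ≤ tr A` for every positive semidefinite `A` and every POVM element `M_k`. -/

lemma _root_.Matrix.PosSemidef.trace_mul_nonneg {n 𝕜 : Type*} [Fintype n] [RCLike 𝕜]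
    {A B : Matrix n n 𝕜} (hA : A.PosSemidef) (hB : B.PosSemidef) : 0 ≤ (A * B).trace := by
  classical
  open scoped MatrixOrder Matrix.Norms.L2Operator in
  obtain ⟨C, rfl⟩ := CStarAlgebra.nonneg_iff_eq_star_mul_self.mp hA.nonneg
  rw [mul_assoc, trace_mul_comm, star_eq_conjTranspose]
  exact (hB.mul_mul_conjTranspose_same C).trace_nonneg

lemma _root_.le_of_isMaxOn_mul_add {α R : Type*} [CommRing R] [LinearOrder R]
    [IsStrictOrderedRing R] {s : Set α} {f g : α → R} {a b : R} (hab : a < b) {x y : α}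
    (hx : x ∈ s) (hy : y ∈ s) (hxmax : IsMaxOn (fun z ↦ a * f z + g z) s x)
    (hymax : IsMaxOn (fun z ↦ b * f z + g z) s y) : f x ≤ f y := by
  have hxy : a * f y + g y ≤ a * f x + g x := hxmax hy
  have hyx : b * f x + g x ≤ b * f y + g y := hymax hx
  nlinarith

lemma IsPOVM.trace_mul_le {M : Fin (N + 1) → Matrix (Fin d) (Fin d) ℂ} (hM : IsPOVM M)
    {A : Matrix (Fin d) (Fin d) ℂ} (hA : A.PosSemidef) (k : Fin (N + 1)) :
    (A * M k).trace ≤ A.trace :=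
  calc (A * M k).trace ≤ ∑ i, (A * M i).trace :=
        Finset.single_le_sum (fun i _ ↦ hA.trace_mul_nonneg (hM.1 i)) (Finset.mem_univ k)
    _ = A.trace := by rw [← trace_sum, ← Finset.mul_sum, hM.2, mul_one]

lemma posSemidef_rho0 {q : Fin N → ℝ} {ρ : Fin N → Matrix (Fin d) (Fin d) ℂ}
    (hq : ∀ i, 0 ≤ q i) (hρ : ∀ i, (ρ i).PosSemidef) : (rho0 q ρ).PosSemidef :=
  posSemidef_sum _ fun i _ ↦ (hρ i).smul (by exact_mod_cast hq i)

lemma PIof_nonneg {q : Fin N → ℝ} {ρ : Fin N → Matrix (Fin d) (Fin d) ℂ}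
    (hρ0 : (rho0 q ρ).PosSemidef) {M : Fin (N + 1) → Matrix (Fin d) (Fin d) ℂ}
    (hM : IsPOVM M) : 0 ≤ PIof q ρ M :=
  (Complex.le_def.mp (hρ0.trace_mul_nonneg (hM.1 0))).1

lemma PIof_le {q : Fin N → ℝ} {ρ : Fin N → Matrix (Fin d) (Fin d) ℂ}
    (hρ0 : (rho0 q ρ).PosSemidef) {M : Fin (N + 1) → Matrix (Fin d) (Fin d) ℂ}
    (hM : IsPOVM M) : PIof q ρ M ≤ (rho0 q ρ).trace.re :=
  (Complex.le_def.mp (hM.trace_mul_le hρ0 0)).1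

lemma Pcor_le {q : Fin N → ℝ} {ρ : Fin N → Matrix (Fin d) (Fin d) ℂ}
    (hq : ∀ i, 0 ≤ q i) (hρ : ∀ i, (ρ i).PosSemidef)
    {M : Fin (N + 1) → Matrix (Fin d) (Fin d) ℂ} (hM : IsPOVM M) :
    Pcor q ρ M ≤ ∑ i, q i * (ρ i).trace.re :=
  Finset.sum_le_sum fun i _ ↦
    mul_le_mul_of_nonneg_left (Complex.le_def.mp (hM.trace_mul_le (hρ i) i.succ)).1 (hq i)

lemma bddAbove_PbarCor (qv : ℝ) {q : Fin N → ℝ} {ρ : Fin N → Matrix (Fin d) (Fin d) ℂ}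
    (hq : ∀ i, 0 ≤ q i) (hρ : ∀ i, (ρ i).PosSemidef) :
    BddAbove {x : ℝ | ∃ M, IsPOVM M ∧ PbarCor qv q ρ M = x} := by
  have hρ0 := posSemidef_rho0 hq hρ
  refine ⟨|qv| * (rho0 q ρ).trace.re + ∑ i, q i * (ρ i).trace.re, ?_⟩
  rintro _ ⟨M, hM, rfl⟩
  have hPI : qv * PIof q ρ M ≤ |qv| * (rho0 q ρ).trace.re :=
    calc qv * PIof q ρ M ≤ |qv| * PIof q ρ M :=
          mul_le_mul_of_nonneg_right (le_abs_self qv) (PIof_nonneg hρ0 hM)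
      _ ≤ |qv| * (rho0 q ρ).trace.re := mul_le_mul_of_nonneg_left (PIof_le hρ0 hM) (abs_nonneg qv)
  exact add_le_add hPI (Pcor_le hq hρ hM)

lemma exists_isMaxOn_of_mem_PIset {qv Q : ℝ} {q : Fin N → ℝ}
    {ρ : Fin N → Matrix (Fin d) (Fin d) ℂ} (hq : ∀ i, 0 ≤ q i) (hρ : ∀ i, (ρ i).PosSemidef)
    (hQ : Q ∈ PIset qv q ρ) :
    ∃ M, IsPOVM M ∧ IsMaxOn (PbarCor qv q ρ) {M | IsPOVM M} M ∧ PIof q ρ M = Q := by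
  obtain ⟨M, hM, hMopt, hMQ⟩ := hQ
  refine ⟨M, hM, isMaxOn_iff.mpr fun M' hM' ↦ ?_, hMQ⟩
  exact hMopt ▸ le_csSup (bddAbove_PbarCor qv hq hρ) ⟨M', hM', rfl⟩

theorem stmt2_general {d N : ℕ}
    (q : Fin N → ℝ) (ρ : Fin N → Matrix (Fin d) (Fin d) ℂ)
    (hq : ∀ i, 0 < q i)
    (hρ : ∀ i, (ρ i).PosSemidef)
    (qv qv' : ℝ) (hlt : qv < qv') :
    ∀ Q ∈ PIset qv q ρ, ∀ Q' ∈ PIset qv' q ρ, Q ≤ Q' := by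
  rintro Q hQ Q' hQ'
  obtain ⟨M, hM, hMmax, rfl⟩ := exists_isMaxOn_of_mem_PIset (fun i ↦ (hq i).le) hρ hQ
  obtain ⟨M', hM', hM'max, rfl⟩ := exists_isMaxOn_of_mem_PIset (fun i ↦ (hq i).le) hρ hQ'
  exact le_of_isMaxOn_mul_add hlt hM hM' hMmax hM'max

/-- If `0 < q < q'`, then `P_I(q) ≤ P_I(q')` pointwise. -/
theorem stmt2 {d N : ℕ} (hd : 0 < d) (hN : 0 < N)
    (q : Fin N → ℝ) (ρ : Fin N → Matrix (Fin d) (Fin d) ℂ)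
    (hq : ∀ i, 0 < q i) (hqsum : ∑ i, q i = 1)
    (hρ : ∀ i, (ρ i).PosSemidef) (htr : ∀ i, (ρ i).trace = 1)
    (hρ0 : (rho0 q ρ).PosDef)
    (qv qv' : ℝ) (hqv : 0 < qv) (hlt : qv < qv') :
    ∀ Q ∈ PIset qv q ρ, ∀ Q' ∈ PIset qv' q ρ, Q ≤ Q' :=
  stmt2_general q ρ hq hρ qv qv' hlt

end FRIR
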